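/- Let X ≥ 1 and s = σ+it with σ > θ and s ≠ 1. Then | ζ(s) − ζ_X(s) − κ·X^{1−s}/(s−1) | ≤ A·((|s| + σ − θ)/(σ − θ))·X^{θ−σ}. -/

import Mathlib

open MeasureTheory Complex Filter

/-- The norm of an element `g` of the free arithmetical semigroup `ι →₀ ℕ`,
given the norms `q i > 1` of the generators (Beurling primes). -/
noncomputable def gnorm {ι : Type*} (q : ι → ℝ) (g : ι →₀ ℕ) : ℝ :=
  g.prod fun i k => q i ^ k

/-- The counting function `N(x) = #{g : |g| ≤ x}`. -/
noncomputable def Ncount {ι : Type*} (q : ι → ℝ) (x : ℝ) : ℕ :=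
  Nat.card {g : ι →₀ ℕ // gnorm q g ≤ x}

/-- The partial zeta function `ζ_X(s) = Σ_{|g| ≤ X} |g|^{-s}` (a finite sum
under the discreteness assumption). -/
noncomputable def zetaX {ι : Type*} (q : ι → ℝ) (X : ℝ) (s : ℂ) : ℂ :=
  ∑ᶠ g ∈ {g : ι →₀ ℕ | gnorm q g ≤ X}, (gnorm q g : ℂ) ^ (-s)

/-- The real-valued partial zeta function at a real argument `σ`:
`ζ_X(σ) = Σ_{|g| ≤ X} |g|^{-σ}`. -/
noncomputable def zetaXR {ι : Type*} (q : ι → ℝ) (X : ℝ) (σ : ℝ) : ℝ :=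
  ∑ᶠ g ∈ {g : ι →₀ ℕ | gnorm q g ≤ X}, (gnorm q g) ^ (-σ)

/-!
Write `R(x) = N(x) - κ(x - 1)`. Abel summation turns the finite sum `ζ_X(s)` into
`N(X) X^{-s} + s ∫_1^X N(x) x^{-s-1} dx`. Substituting `N = R + κ(x - 1)` and splitting the
integral defining `ζ(s)` at `X`, everything but a tail cancels exactly:
`ζ(s) - ζ_X(s) - κ X^{1-s}/(s-1) = s ∫_X^∞ R(x) x^{-s-1} dx - R(X) X^{-s}`.
Axiom A bounds the tail integral by `A X^{θ-σ}/(σ-θ)` and the boundary term by `A X^{θ-σ}`.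
-/

open Set Finset

lemma cpow_neg_eq_add_integral {a X : ℝ} (ha : 0 < a) (haX : a ≤ X) (s : ℂ) :
    (a : ℂ) ^ (-s) = (X : ℂ) ^ (-s) + s * ∫ x in Ioc a X, (x : ℂ) ^ (-s - 1) := by
  rcases eq_or_ne s 0 with rfl | hs
  · simp
  have h0 : (0 : ℝ) ∉ Set.uIcc a X := fun h => ha.not_ge (uIcc_of_le haX ▸ h).1
  rw [← intervalIntegral.integral_of_le haX,
    integral_cpow (Or.inr ⟨by simpa using hs, h0⟩), sub_add_cancel]
  field_simp
  ring

lemma sum_cpow_neg_eq_add_integral {α : Type*} (S : Finset α) (f : α → ℝ) {a X : ℝ}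
    (ha : 0 < a) (haX : a ≤ X) (hf : ∀ g ∈ S, a ≤ f g ∧ f g ≤ X) (s : ℂ) :
    ∑ g ∈ S, (f g : ℂ) ^ (-s) = (#S : ℂ) * (X : ℂ) ^ (-s) +
      s * ∫ x in Ioc a X, (#{g ∈ S | f g ≤ x} : ℂ) * (x : ℂ) ^ (-s - 1) := by
  have hintegrable : IntegrableOn (fun x : ℝ => (x : ℂ) ^ (-s - 1)) (Ioc a X) :=
    (intervalIntegral.intervalIntegrable_cpow (Or.inr fun h =>
      ha.not_ge (uIcc_of_le haX ▸ h).1)).1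
  have hterm : ∀ g ∈ S, (f g : ℂ) ^ (-s) = (X : ℂ) ^ (-s) +
      s * ∫ x in Ioc a X, (Ici (f g)).indicator (fun x : ℝ => (x : ℂ) ^ (-s - 1)) x := by
    -- summed over `g`, these indicators count the points `f g ≤ x`
    intro g hg
    obtain ⟨hag, hgX⟩ := hf g hg
    have hset : (Ioc a X ∩ Ici (f g) : Set ℝ) =ᵐ[volume] Ioc (f g) X := by
      have := (EventuallyEq.rfl (l := ae volume) (f := Ioc a X)).inter
        (Ioi_ae_eq_Ici (a := f g)).symm
      rwa [Ioc_inter_Ioi, sup_eq_right.mpr hag] at this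
    rw [setIntegral_indicator measurableSet_Ici, setIntegral_congr_set hset]
    exact cpow_neg_eq_add_integral (ha.trans_le hag) hgX s
  have hcount : ∀ x : ℝ, ∑ g ∈ S, (Ici (f g)).indicator (fun x : ℝ => (x : ℂ) ^ (-s - 1)) x =
      (#{g ∈ S | f g ≤ x} : ℂ) * (x : ℂ) ^ (-s - 1) := by
    intro x
    simp only [indicator_apply, Set.mem_Ici]
    rw [← Finset.sum_filter, Finset.sum_const, nsmul_eq_mul]
  rw [Finset.sum_congr rfl hterm, Finset.sum_add_distrib, Finset.sum_const, nsmul_eq_mul,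
    ← Finset.mul_sum, ← integral_finsetSum S fun g _ => hintegrable.indicator measurableSet_Ici]
  simp_rw [hcount]

lemma mul_integral_sub_one_mul_cpow {X : ℝ} (hX : 1 ≤ X) {s : ℂ} (hs1 : s ≠ 1) :
    s * ∫ x in Ioc 1 X, ((x : ℂ) - 1) * (x : ℂ) ^ (-s - 1) =
      (1 - (X : ℂ) ^ (1 - s)) / (s - 1) - ((X : ℂ) - 1) * (X : ℂ) ^ (-s) := by
  have hX0 : (X : ℂ) ≠ 0 := by exact_mod_cast (one_pos.trans_le hX).ne'
  have hX1s : (X : ℂ) ^ (1 - s) = X * (X : ℂ) ^ (-s) := by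
    rw [sub_eq_add_neg, cpow_add _ _ hX0, cpow_one]
  rcases eq_or_ne s 0 with rfl | hs0
  · simp only [zero_mul, sub_zero, neg_zero, cpow_zero, cpow_one]
    ring
  have h0 : (0 : ℝ) ∉ Set.uIcc 1 X := fun h => (uIcc_of_le hX ▸ h).1.not_gt one_pos
  have hpow : ∀ x ∈ Set.uIcc (1 : ℝ) X,
      ((x : ℂ) - 1) * (x : ℂ) ^ (-s - 1) = (x : ℂ) ^ (-s) - (x : ℂ) ^ (-s - 1) := by
    intro x hx
    have hx0 : (x : ℂ) ≠ 0 := by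
      exact_mod_cast (one_pos.trans_le (uIcc_of_le hX ▸ hx).1).ne'
    have h := cpow_add (-s - 1) 1 hx0
    rw [cpow_one, sub_add_cancel] at h
    rw [h]
    ring
  rw [← intervalIntegral.integral_of_le hX, intervalIntegral.integral_congr hpow,
    intervalIntegral.integral_sub (intervalIntegral.intervalIntegrable_cpow (Or.inr h0))
      (intervalIntegral.intervalIntegrable_cpow (Or.inr h0)),
    integral_cpow (Or.inr ⟨fun h => hs1 (by linear_combination -h), h0⟩),
    integral_cpow (Or.inr ⟨by simpa using hs0, h0⟩), show -s - 1 + 1 = -s by ring,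
    show -s + 1 = 1 - s by ring, hX1s, ofReal_one, one_cpow, one_cpow]
  field_simp
  ring

lemma norm_ofReal_mul_cpow_le {r A θ x : ℝ} (hx : 0 < x) (hr : |r| ≤ A * x ^ θ) (w : ℂ) :
    ‖(r : ℂ) * (x : ℂ) ^ w‖ ≤ A * x ^ (θ + w.re) := by
  rw [norm_mul, norm_real, Real.norm_eq_abs, norm_cpow_eq_rpow_re_of_pos hx, Real.rpow_add hx,
    ← mul_assoc]
  exact mul_le_mul_of_nonneg_right hr (by positivity)

lemma norm_integral_Ioi_mul_cpow_le {R : ℝ → ℝ} {A θ X : ℝ} (hX : 0 < X)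
    (hR : ∀ x, X < x → |R x| ≤ A * x ^ θ) {s : ℂ} (hs : θ < s.re) :
    ‖∫ x in Ioi X, (R x : ℂ) * (x : ℂ) ^ (-s - 1)‖ ≤ A * X ^ (θ - s.re) / (s.re - θ) := by
  have hexp : θ + (-s - 1).re = θ - s.re - 1 := by simp only [sub_re, neg_re, one_re]; ring
  have hbound : ∀ x ∈ Ioi X, ‖(R x : ℂ) * (x : ℂ) ^ (-s - 1)‖ ≤ A * x ^ (θ - s.re - 1) :=
    fun x hx => hexp ▸ norm_ofReal_mul_cpow_le (hX.trans hx) (hR x hx) _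
  calc _ ≤ ∫ x in Ioi X, A * x ^ (θ - s.re - 1) :=
        norm_integral_le_of_norm_le ((integrableOn_Ioi_rpow_of_lt (by linarith) hX).const_mul A)
          ((ae_restrict_iff' measurableSet_Ioi).2 (ae_of_all _ hbound))
    _ = A * X ^ (θ - s.re) / (s.re - θ) := by
        rw [integral_const_mul, integral_Ioi_rpow_of_lt (by linarith) hX, sub_add_cancel,
          neg_div, ← div_neg, neg_sub, mul_div_assoc]

section Beurling

variable {ι : Type*} {q : ι → ℝ}

lemma one_le_gnorm (hq : ∀ i, 1 ≤ q i) (g : ι →₀ ℕ) : 1 ≤ gnorm q g :=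
  Finset.one_le_prod fun i _ => one_le_pow₀ (hq i)

lemma Ncount_eq_card_filter (hdisc : ∀ x : ℝ, {g : ι →₀ ℕ | gnorm q g ≤ x}.Finite)
    {x X : ℝ} (hxX : x ≤ X) :
    Ncount q x = #{g ∈ (hdisc X).toFinset | gnorm q g ≤ x} := by
  rw [Ncount, ← Set.coe_ofPred, Nat.card_eq_card_finite_toFinset (hdisc x)]
  congr 1
  ext g
  simp only [Set.Finite.mem_toFinset, Set.mem_ofPred_eq, Finset.mem_filter]
  exact ⟨fun h => ⟨h.trans hxX, h⟩, And.right⟩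

lemma zetaX_eq_add_integral (hq : ∀ i, 1 ≤ q i)
    (hdisc : ∀ x : ℝ, {g : ι →₀ ℕ | gnorm q g ≤ x}.Finite) {X : ℝ} (hX : 1 ≤ X) (s : ℂ) :
    zetaX q X s = (Ncount q X : ℂ) * (X : ℂ) ^ (-s) +
      s * ∫ x in Ioc 1 X, (Ncount q x : ℂ) * (x : ℂ) ^ (-s - 1) := by
  rw [zetaX, ← (hdisc X).coe_toFinset, finsum_mem_coe_finset,
    sum_cpow_neg_eq_add_integral _ _ one_pos hX
      fun g hg => ⟨one_le_gnorm hq g, (hdisc X).mem_toFinset.1 hg⟩,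
    Ncount_eq_card_filter hdisc le_rfl,
    Finset.filter_true_of_mem (p := fun g => gnorm q g ≤ X) fun g => (hdisc X).mem_toFinset.1]
  congr 2
  refine setIntegral_congr_fun measurableSet_Ioc fun x hx => ?_
  rw [Ncount_eq_card_filter hdisc hx.2]

noncomputable def countRemainder (q : ι → ℝ) (κ x : ℝ) : ℝ :=
  Ncount q x - κ * (x - 1)

lemma zeta_repr_sub_zetaX_eq (hq : ∀ i, 1 ≤ q i)
    (hdisc : ∀ x : ℝ, {g : ι →₀ ℕ | gnorm q g ≤ x}.Finite) (κ : ℝ) {X : ℝ} (hX : 1 ≤ X)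
    {s : ℂ} (hs1 : s ≠ 1)
    (hint : IntegrableOn (fun x : ℝ => (countRemainder q κ x : ℂ) * (x : ℂ) ^ (-s - 1)) (Ioi 1)) :
    κ / (s - 1) + s * (∫ x in Ioi 1, (countRemainder q κ x : ℂ) * (x : ℂ) ^ (-s - 1)) -
        zetaX q X s - κ * (X : ℂ) ^ (1 - s) / (s - 1) =
      s * (∫ x in Ioi X, (countRemainder q κ x : ℂ) * (x : ℂ) ^ (-s - 1)) -
        countRemainder q κ X * (X : ℂ) ^ (-s) := by
  have h0 : (0 : ℝ) ∉ Set.uIcc 1 X := fun h => (uIcc_of_le hX ▸ h).1.not_gt one_pos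
  have hlin : IntegrableOn (fun x : ℝ => ((x : ℂ) - 1) * (x : ℂ) ^ (-s - 1)) (Ioc 1 X) :=
    ((intervalIntegral.intervalIntegrable_cpow (Or.inr h0)).continuousOn_mul
      (by fun_prop)).1
  have hsplit : ∫ x in Ioi 1, (countRemainder q κ x : ℂ) * (x : ℂ) ^ (-s - 1) =
      (∫ x in Ioc 1 X, (countRemainder q κ x : ℂ) * (x : ℂ) ^ (-s - 1)) +
        ∫ x in Ioi X, (countRemainder q κ x : ℂ) * (x : ℂ) ^ (-s - 1) := by
    rw [← Ioc_union_Ioi_eq_Ioi hX]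
    exact setIntegral_union (Ioc_disjoint_Ioi le_rfl) measurableSet_Ioi
      (hint.mono_set Ioc_subset_Ioi_self) (hint.mono_set (Ioi_subset_Ioi hX))
  have hcount : ∫ x in Ioc 1 X, (Ncount q x : ℂ) * (x : ℂ) ^ (-s - 1) =
      (∫ x in Ioc 1 X, (countRemainder q κ x : ℂ) * (x : ℂ) ^ (-s - 1)) +
        κ * ∫ x in Ioc 1 X, ((x : ℂ) - 1) * (x : ℂ) ^ (-s - 1) := by
    rw [← integral_const_mul, ← integral_add (hint.mono_set Ioc_subset_Ioi_self)
      (hlin.const_mul _)]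
    congr 1
    ext x
    simp only [countRemainder]
    push_cast
    ring
  rw [zetaX_eq_add_integral hq hdisc hX, hsplit, hcount]
  simp only [countRemainder]
  push_cast
  linear_combination (-κ : ℂ) * mul_integral_sub_one_mul_cpow hX hs1

end Beurling

theorem beurling_zeta_tail_bound_general
    {ι : Type*} (q : ι → ℝ) (θ A κ : ℝ) (ζ : ℂ → ℂ)
    (hq : ∀ i, 1 < q i)
    (hdisc : ∀ x : ℝ, {g : ι →₀ ℕ | gnorm q g ≤ x}.Finite)
    (hAx : ∀ x : ℝ, 1 ≤ x → |(Ncount q x : ℝ) - κ * (x - 1)| ≤ A * x ^ θ)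
    (hint : ∀ s : ℂ, θ < s.re →
      MeasureTheory.IntegrableOn
        (fun x : ℝ => (((Ncount q x : ℝ) - κ * (x - 1) : ℝ) : ℂ) * (x : ℂ) ^ (-s - 1))
        (Set.Ioi 1))
    (hζ : ∀ s : ℂ, θ < s.re → s ≠ 1 →
      ζ s = (κ : ℂ) / (s - 1) +
        s * ∫ x in Set.Ioi (1 : ℝ),
          (((Ncount q x : ℝ) - κ * (x - 1) : ℝ) : ℂ) * (x : ℂ) ^ (-s - 1))
    (X : ℝ) (hX : 1 ≤ X) (s : ℂ) (hs : θ < s.re) (hs1 : s ≠ 1) :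
    ‖ζ s - zetaX q X s - (κ : ℂ) * (X : ℂ) ^ ((1 : ℂ) - s) / (s - 1)‖ ≤
      A * ((‖s‖ + s.re - θ) / (s.re - θ)) * X ^ (θ - s.re) := by
  have hX0 : 0 < X := one_pos.trans_le hX
  have htail := norm_integral_Ioi_mul_cpow_le (R := countRemainder q κ) hX0
    (fun x hx => hAx x (hX.trans hx.le)) hs
  have hboundary := norm_ofReal_mul_cpow_le hX0 (hAx X hX) (-s)
  have hσθ : s.re - θ ≠ 0 := (sub_pos.2 hs).ne'
  calc ‖ζ s - zetaX q X s - (κ : ℂ) * (X : ℂ) ^ ((1 : ℂ) - s) / (s - 1)‖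
      = ‖s * (∫ x in Ioi X, (countRemainder q κ x : ℂ) * (x : ℂ) ^ (-s - 1)) -
          countRemainder q κ X * (X : ℂ) ^ (-s)‖ := by
        rw [hζ s hs hs1]
        exact congrArg _
          (zeta_repr_sub_zetaX_eq (fun i => (hq i).le) hdisc κ hX hs1 (hint s hs))
    _ ≤ ‖s‖ * (A * X ^ (θ - s.re) / (s.re - θ)) + A * X ^ (θ + (-s).re) := by
        refine (norm_sub_le _ _).trans (add_le_add ?_ hboundary)
        rw [norm_mul]
        exact mul_le_mul_of_nonneg_left htail (norm_nonneg s)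
    _ = A * ((‖s‖ + s.re - θ) / (s.re - θ)) * X ^ (θ - s.re) := by
        rw [neg_re, ← sub_eq_add_neg]
        field_simp
        ring

theorem beurling_zeta_tail_bound
    {ι : Type*} [Countable ι] (q : ι → ℝ) (θ A κ : ℝ) (ζ : ℂ → ℂ)
    (hq : ∀ i, 1 < q i)
    (hdisc : ∀ x : ℝ, {g : ι →₀ ℕ | gnorm q g ≤ x}.Finite)
    (hθ0 : 0 < θ) (hθ1 : θ < 1) (hA : 0 < A) (hκ : 0 < κ)
    (hAx : ∀ x : ℝ, 1 ≤ x → |(Ncount q x : ℝ) - κ * (x - 1)| ≤ A * x ^ θ)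
    (hint : ∀ s : ℂ, θ < s.re →
      MeasureTheory.IntegrableOn
        (fun x : ℝ => (((Ncount q x : ℝ) - κ * (x - 1) : ℝ) : ℂ) * (x : ℂ) ^ (-s - 1))
        (Set.Ioi 1))
    (hζ : ∀ s : ℂ, θ < s.re → s ≠ 1 →
      ζ s = (κ : ℂ) / (s - 1) +
        s * ∫ x in Set.Ioi (1 : ℝ),
          (((Ncount q x : ℝ) - κ * (x - 1) : ℝ) : ℂ) * (x : ℂ) ^ (-s - 1))
    (hζdiff : DifferentiableOn ℂ ζ {s : ℂ | θ < s.re ∧ s ≠ 1})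
    (hζsum : ∀ s : ℂ, 1 < s.re → ζ s = ∑' g : ι →₀ ℕ, (gnorm q g : ℂ) ^ (-s))
    (X : ℝ) (hX : 1 ≤ X) (s : ℂ) (hs : θ < s.re) (hs1 : s ≠ 1) :
    ‖ζ s - zetaX q X s - (κ : ℂ) * (X : ℂ) ^ ((1 : ℂ) - s) / (s - 1)‖ ≤
      A * ((‖s‖ + s.re - θ) / (s.re - θ)) * X ^ (θ - s.re) :=
  beurling_zeta_tail_bound_general q θ A κ ζ hq hdisc hAx hint hζ X hX s hs hs1
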